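/- For each n ≥ 0 and 0 ≤ m ≤ n with n and m both even, P̂_n^m(cos θ) is a polynomial in cos 2θ of degree n/2; that is, there exist coefficients B_{n,m}^k (k = 0,…,n/2) such that P̂_n^m(cos θ) = ∑_{k=0}^{n/2} B_{n,m}^k T_k(cos 2θ) for all θ. -/

import Mathlib

noncomputable section

/-- The Legendre polynomial `P_n`, via Rodrigues' formula. -/
def legendreP (n : ℕ) : Polynomial ℝ :=
  ((1 : ℝ) / (2 ^ n * n.factorial)) •
    (Polynomial.derivative^[n] ((Polynomial.X ^ 2 - 1) ^ n))

/-- The associated Legendre function `P_n^m` for `m ≥ 0`: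
`P_n^m(x) = (−1)^m (1−x²)^{m/2} dᵐ/dxᵐ P_n(x)`. -/
def assocLegendreAux (n m : ℕ) (x : ℝ) : ℝ :=
  (-1) ^ m * (1 - x ^ 2) ^ ((m : ℝ) / 2) *
    (Polynomial.derivative^[m] (legendreP n)).eval x

/-- The associated Legendre function `P_n^m` for `−n ≤ m ≤ n`, extended to negative
orders via `P_n^{−m}(x) = (−1)^m (n−m)!/(n+m)! P_n^m(x)`. -/
def assocLegendre (n : ℕ) (m : ℤ) (x : ℝ) : ℝ :=
  if 0 ≤ m then assocLegendreAux n m.toNat x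
  else (-1) ^ (-m).toNat * ((n - (-m).toNat).factorial : ℝ) /
      ((n + (-m).toNat).factorial : ℝ) * assocLegendreAux n (-m).toNat x

/-- The normalized associated Legendre function
`P̂_n^m(x) = √((2n+1)/(4π)·(n−m)!/(n+m)!) P_n^m(x)`. -/
def normAssocLegendre (n : ℕ) (m : ℤ) (x : ℝ) : ℝ :=
  Real.sqrt ((2 * n + 1) / (4 * Real.pi) *
      ((((n : ℤ) - m).toNat.factorial : ℝ) / (((n : ℤ) + m).toNat.factorial : ℝ))) *
    assocLegendre n m x

end

set_option maxRecDepth 4000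
open Polynomial

-- coeff of p.comp (-X)
lemma coeff_comp_negX (p : ℝ[X]) (i : ℕ) :
    (p.comp (-X)).coeff i = (-1) ^ i * p.coeff i := by
  induction p using Polynomial.induction_on' with
  | add p q hp hq => simp [add_comp, coeff_add, hp, hq, mul_add]
  | monomial n a =>
    rw [monomial_comp, neg_pow,
      show ((-1 : ℝ[X])) ^ n = C ((-1) ^ n) by rw [map_pow, map_neg, map_one],
      coeff_C_mul, coeff_C_mul, coeff_X_pow, coeff_monomial]
    by_cases h : i = n
    · subst h; simp; ring
    · simp [h, Ne.symm h]

lemma deriv_comp_negX (p : ℝ[X]) :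
    derivative (p.comp (-X)) = -((derivative p).comp (-X)) := by
  rw [derivative_comp]; simp

lemma iter_deriv_comp_negX (k : ℕ) (p : ℝ[X]) :
    derivative^[k] (p.comp (-X)) = ((-1 : ℝ) ^ k) • ((derivative^[k] p).comp (-X)) := by
  induction k with
  | zero => simp
  | succ k ih =>
    rw [Function.iterate_succ_apply', ih, derivative_smul, deriv_comp_negX,
      show derivative ((⇑derivative)^[k] p) = (⇑derivative)^[k+1] p from
        (Function.iterate_succ_apply' _ _ _).symm, pow_succ, mul_smul]
    simp

lemma sum_pair (N : ℕ) (f : ℕ → ℝ) :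
    ∑ i ∈ Finset.range (2 * N), f i = ∑ k ∈ Finset.range N, (f (2 * k) + f (2 * k + 1)) := by
  induction N with
  | zero => simp
  | succ N ih =>
    rw [Finset.sum_range_succ, ← ih]
    have h : 2 * (N + 1) = (2 * N + 1) + 1 := by ring
    rw [h, Finset.sum_range_succ, Finset.sum_range_succ]
    ring

open Polynomial.Chebyshev in
lemma T_deg_coeff : ∀ k : ℕ, (T ℝ k).natDegree ≤ k ∧ (T ℝ k).coeff k = 2 ^ (k - 1) := by
  intro k
  induction k using Nat.twoStepInduction with
  | zero => simp
  | one => simp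
  | more k ih1 ih2 =>
    have hrec : T ℝ ((k : ℤ) + 2) = 2 * X * T ℝ ((k : ℤ) + 1) - T ℝ (k : ℤ) := T_add_two ℝ k
    have hc1 : ((k + 2 : ℕ) : ℤ) = (k : ℤ) + 2 := by push_cast; ring
    have hc2 : ((k + 1 : ℕ) : ℤ) = (k : ℤ) + 1 := by push_cast; ring
    rw [hc1, hrec, ← hc2]
    constructor
    · refine (natDegree_sub_le _ _).trans ?_
      refine max_le ?_ (ih1.1.trans (by omega))
      refine (natDegree_mul_le).trans ?_
      have h2x : (2 * X : ℝ[X]).natDegree ≤ 1 := (natDegree_mul_le).trans (by simp)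
      have := ih2.1
      omega
    · have h0 : (T ℝ (k : ℤ)).coeff (k + 2) = 0 :=
        coeff_eq_zero_of_natDegree_lt (lt_of_le_of_lt ih1.1 (by omega))
      rw [coeff_sub, h0, sub_zero, mul_assoc, show ((2 : ℝ[X])) = C 2 from (map_ofNat Polynomial.C 2).symm,
        coeff_C_mul, show k + 2 = (k + 1) + 1 from rfl, coeff_X_mul, ih2.2]
      rw [Nat.add_sub_cancel, Nat.add_sub_cancel, pow_succ]
      ring

open Polynomial.Chebyshev in
lemma cheb_span (d : ℕ) : ∀ r : ℝ[X], r.natDegree ≤ d →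
    ∃ B : ℕ → ℝ, ∀ y : ℝ, r.eval y = ∑ k ∈ Finset.range (d + 1), B k * (T ℝ k).eval y := by
  induction d with
  | zero =>
    intro r hr
    refine ⟨fun _ => r.coeff 0, fun y => ?_⟩
    rw [Polynomial.eq_C_of_natDegree_le_zero hr]
    simp
  | succ d ih =>
    intro r hr
    set c : ℝ := r.coeff (d + 1) / 2 ^ d with hc
    set r' : ℝ[X] := r - C c * T ℝ ((d + 1 : ℕ) : ℤ) with hr'
    have hdeg : r'.natDegree ≤ d := by
      rw [natDegree_le_iff_coeff_eq_zero]
      intro N hN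
      rcases eq_or_lt_of_le (Nat.succ_le_of_lt hN) with h | h
      · rw [hr', coeff_sub, coeff_C_mul, ← h]
        rw [(T_deg_coeff (d + 1)).2]
        simp [hc]
      · rw [hr', coeff_sub, coeff_C_mul,
          coeff_eq_zero_of_natDegree_lt (lt_of_le_of_lt hr h),
          coeff_eq_zero_of_natDegree_lt (lt_of_le_of_lt (T_deg_coeff (d + 1)).1 h)]
        ring
    obtain ⟨B', hB'⟩ := ih r' hdeg
    refine ⟨fun k => if k = d + 1 then c else B' k, fun y => ?_⟩
    rw [Finset.sum_range_succ]
    have : r.eval y = r'.eval y + c * (T ℝ ((d + 1 : ℕ) : ℤ)).eval y := by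
      rw [hr']; simp
    rw [this, hB']
    simp only [if_pos rfl]
    congr 1
    apply Finset.sum_congr rfl
    intro k hk
    have : k ≠ d + 1 := by
      have := Finset.mem_range.mp hk; omega
    rw [if_neg this]

lemma even_poly (p : ℝ[X]) (hcomp : p.comp (-X) = p) (d : ℕ) (hd : p.natDegree ≤ 2 * d) :
    ∃ r : ℝ[X], r.natDegree ≤ d ∧ ∀ x : ℝ, p.eval x = r.eval (2 * x ^ 2 - 1) := by
  have hodd : ∀ i : ℕ, Odd i → p.coeff i = 0 := by
    intro i hi
    have h := congrArg (fun q : ℝ[X] => q.coeff i) hcomp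
    simp only [coeff_comp_negX] at h
    rw [hi.neg_one_pow] at h
    linarith
  refine ⟨∑ k ∈ Finset.range (d + 1), C (p.coeff (2 * k)) * (C (1 / 2 : ℝ) * (X + 1)) ^ k,
    ?_, ?_⟩
  · refine natDegree_sum_le_of_forall_le _ _ fun k hk => ?_
    refine natDegree_mul_le.trans ?_
    have h1 : ((C (1 / 2 : ℝ) * (X + 1)) ^ k).natDegree ≤ k := by
      refine natDegree_pow_le.trans ?_
      have : (C (1 / 2 : ℝ) * (X + 1)).natDegree ≤ 1 := by
        refine natDegree_mul_le.trans ?_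
        have : (X + 1 : ℝ[X]).natDegree ≤ 1 :=
          (natDegree_add_le _ _).trans (by simp)
        simp only [natDegree_C]
        omega
      nlinarith
    have hk' := Finset.mem_range.mp hk
    simp only [natDegree_C]
    omega
  · intro x
    have h1 : p.eval x = ∑ i ∈ Finset.range (2 * (d + 1)), p.coeff i * x ^ i :=
      eval_eq_sum_range' (lt_of_le_of_lt hd (by omega)) x
    rw [h1, sum_pair]
    rw [eval_finset_sum]
    refine Finset.sum_congr rfl fun k hk => ?_
    rw [hodd (2 * k + 1) ⟨k, by ring⟩]
    simp only [eval_mul, eval_pow, eval_C, eval_add, eval_X, eval_one]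
    rw [show (1 / 2 : ℝ) * (2 * x ^ 2 - 1 + 1) = x ^ 2 by ring, ← pow_mul]
    ring

lemma legendre_iter_deriv_comp_neg (n m : ℕ) (hnm : Even (n + m)) :
    (derivative^[m] (legendreP n)).comp (-X) = derivative^[m] (legendreP n) := by
  have hq : ((X ^ 2 - 1 : ℝ[X]) ^ n).comp (-X) = (X ^ 2 - 1) ^ n := by
    simp [pow_comp, sub_comp, one_comp, neg_sq]
  have h2 := iter_deriv_comp_negX (n + m) ((X ^ 2 - 1 : ℝ[X]) ^ n)
  rw [hq, hnm.neg_one_pow, one_smul] at h2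
  unfold legendreP
  rw [iterate_derivative_smul, smul_comp, ← Function.iterate_add_apply]
  congr 1
  rw [show m + n = n + m by ring]
  exact h2.symm

open Polynomial.Chebyshev in
/-- For `n` and `m` both even with `0 ≤ m ≤ n`, `P̂_n^m(cos θ)` is a linear combination
`∑_{k=0}^{n/2} B_{n,m}^k T_k(cos 2θ)` of Chebyshev polynomials in `cos 2θ`. -/
theorem normAssocLegendre_even_even_cheb_expansion (n m : ℕ)
    (hmn : m ≤ n) (hn : Even n) (hm : Even m) :
    ∃ B : ℕ → ℝ, ∀ θ : ℝ,
      normAssocLegendre n (m : ℤ) (Real.cos θ) =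
        ∑ k ∈ Finset.range (n / 2 + 1), B k * (T ℝ k).eval (Real.cos (2 * θ)) := by
  have hn2 : 2 ∣ n := hn.two_dvd
  have hm2 : 2 ∣ m := hm.two_dvd
  set q : ℝ[X] := derivative^[m] (legendreP n) with hq
  set P : ℝ[X] := (1 - X ^ 2) ^ (m / 2) * q with hP
  have hPcomp : P.comp (-X) = P := by
    rw [hP, mul_comp, legendre_iter_deriv_comp_neg n m (hn.add hm)]
    congr 1
    simp [pow_comp, sub_comp, one_comp, neg_sq]
  have hPdeg : P.natDegree ≤ 2 * (n / 2) := by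
    have h1 : (1 - X ^ 2 : ℝ[X]).natDegree ≤ 2 :=
      (natDegree_sub_le _ _).trans (by simp)
    have h2 : ((1 - X ^ 2 : ℝ[X]) ^ (m / 2)).natDegree ≤ m / 2 * 2 :=
      natDegree_pow_le.trans (Nat.mul_le_mul_left _ h1)
    have h3 : (legendreP n).natDegree ≤ n := by
      unfold legendreP
      refine (natDegree_smul_le _ _).trans ?_
      refine (natDegree_iterate_derivative _ _).trans ?_
      have : ((X ^ 2 - 1 : ℝ[X]) ^ n).natDegree ≤ n * 2 :=
        natDegree_pow_le.trans
          (Nat.mul_le_mul_left _ ((natDegree_sub_le _ _).trans (by simp)))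
      omega
    have h4 : q.natDegree ≤ n - m := by
      rw [hq]
      refine (natDegree_iterate_derivative _ _).trans ?_
      omega
    have h5 := natDegree_mul_le (p := ((1 - X ^ 2 : ℝ[X]) ^ (m / 2))) (q := q)
    rw [← hP] at h5
    omega
  obtain ⟨r, hrdeg, hr⟩ := even_poly P hPcomp (n / 2) hPdeg
  set c : ℝ := Real.sqrt ((2 * n + 1) / (4 * Real.pi) *
      ((((n : ℤ) - (m : ℤ)).toNat.factorial : ℝ) /
        (((n : ℤ) + (m : ℤ)).toNat.factorial : ℝ))) with hc
  obtain ⟨B, hB⟩ := cheb_span (n / 2) (C c * r)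
    (natDegree_mul_le.trans (by simp [hrdeg]))
  refine ⟨B, fun θ => ?_⟩
  rw [← hB (Real.cos (2 * θ))]
  have hrpow : (1 - Real.cos θ ^ 2) ^ ((m : ℝ) / 2)
      = (1 - Real.cos θ ^ 2) ^ (m / 2 : ℕ) := by
    have h5 : ((m : ℝ)) / 2 = ((m / 2 : ℕ) : ℝ) := by
      obtain ⟨t, rfl⟩ := hm
      have ht : (t + t) / 2 = t := by omega
      rw [ht]; push_cast; ring
    rw [h5, Real.rpow_natCast]
  have hPe : P.eval (Real.cos θ)
      = (1 - Real.cos θ ^ 2) ^ (m / 2 : ℕ) * q.eval (Real.cos θ) := by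
    rw [hP]; simp
  rw [normAssocLegendre, assocLegendre, if_pos (Int.ofNat_nonneg m), Int.toNat_natCast,
    assocLegendreAux, hm.neg_one_pow, one_mul, hrpow, ← hq, ← hPe, hr,
    ← Real.cos_two_mul, ← hc, eval_mul, eval_C]
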